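/- arXiv:2409.08011 — 2 statements merged into one kernel-verified Lean document; each statement's English description precedes it below -/
import Mathlib

section
/- Let A and B be n×n real symmetric matrices with A positive definite and B positive semidefinite. If det(A·B) = (trace(A·B)/n)^n, then A·B = λ·I for some λ ≥ 0. -/
open Matrix Finset
open scoped MatrixOrder ComplexOrder

/-!
Conjugating by `S = √A` turns `A * B` into the positive semidefinite matrix `S * B * S`, with the
same determinant and trace. For a positive semidefinite matrix, the determinant and the trace are the
product and the sum of its (nonnegative) eigenvalues, so the hypothesis is the equality case of
AM-GM: all eigenvalues equal the mean `λ`, hence `S * B * S = λ • 1`, and then `A * B = λ • 1` too.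
-/

theorem Real.eq_arith_mean_of_prod_eq_arith_mean_pow {ι : Type*} {s : Finset ι} {z : ι → ℝ}
    (hz : ∀ i ∈ s, 0 ≤ z i) (h : ∏ i ∈ s, z i = ((∑ i ∈ s, z i) / #s) ^ #s) :
    ∀ j ∈ s, z j = (∑ i ∈ s, z i) / #s := by
  intro j hj
  have hs : (#s : ℝ) ≠ 0 := by exact_mod_cast (card_pos.mpr ⟨j, hj⟩).ne'
  have hw : ∑ _i ∈ s, (#s : ℝ)⁻¹ = 1 := by simp [hs]
  have hmean : ∑ i ∈ s, (#s : ℝ)⁻¹ * z i = (∑ i ∈ s, z i) / #s := by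
    rw [← mul_sum, inv_mul_eq_div]
  have hgeom : ∏ i ∈ s, z i ^ (#s : ℝ)⁻¹ = (∑ i ∈ s, z i) / #s := by
    rw [Real.finsetProd_rpow s z hz, h, Real.pow_rpow_inv_natCast _ (by exact_mod_cast hs)]
    exact div_nonneg (sum_nonneg hz) (Nat.cast_nonneg _)
  rw [← hmean]
  exact (Real.geom_mean_eq_arith_mean_weighted_iff_of_pos' s _ z
    (fun _ _ => inv_pos.mpr (by positivity)) hw hz).mp (hgeom.trans hmean.symm) j hj

namespace Matrix

variable {n : Type*} [Fintype n] [DecidableEq n]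

theorem PosSemidef.eq_smul_one_of_det_eq_trace_div_card_pow {M : Matrix n n ℝ} (hM : M.PosSemidef)
    (h : M.det = (M.trace / Fintype.card n) ^ Fintype.card n) :
    M = (M.trace / Fintype.card n) • 1 := by
  have htr : M.trace = ∑ i, hM.isHermitian.eigenvalues i := by
    simpa using hM.isHermitian.trace_eq_sum_eigenvalues
  have hdet : M.det = ∏ i, hM.isHermitian.eigenvalues i := by
    simpa using hM.isHermitian.det_eq_prod_eigenvalues
  rw [htr, hdet, ← card_univ] at h
  rw [htr, ← card_univ]
  have hconst := Real.eq_arith_mean_of_prod_eq_arith_mean_pow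
    (fun i _ => hM.eigenvalues_nonneg i) h
  rw [← Algebra.algebraMap_eq_smul_one]
  refine CFC.eq_algebraMap_of_spectrum_subset_singleton M _ ?_ hM.isHermitian
  rw [hM.isHermitian.spectrum_real_eq_range_eigenvalues]
  rintro _ ⟨i, rfl⟩
  exact hconst i (mem_univ i)

variable {𝕜 : Type*} [RCLike 𝕜]

theorem posSemidef_sqrt_mul_mul_sqrt (A : Matrix n n 𝕜) {B : Matrix n n 𝕜} (hB : B.PosSemidef) :
    (CFC.sqrt A * B * CFC.sqrt A).PosSemidef := by
  simpa [(CFC.sqrt_nonneg A).posSemidef.isHermitian.eq] using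
    hB.mul_mul_conjTranspose_same (CFC.sqrt A)

theorem det_sqrt_mul_mul_sqrt {A : Matrix n n 𝕜} (hA : 0 ≤ A) (B : Matrix n n 𝕜) :
    (CFC.sqrt A * B * CFC.sqrt A).det = (A * B).det := by
  rw [det_mul, det_mul, mul_right_comm, ← det_mul, CFC.sqrt_mul_sqrt_self A hA, det_mul]

theorem trace_sqrt_mul_mul_sqrt {A : Matrix n n 𝕜} (hA : 0 ≤ A) (B : Matrix n n 𝕜) :
    (CFC.sqrt A * B * CFC.sqrt A).trace = (A * B).trace := by
  rw [trace_mul_cycle, CFC.sqrt_mul_sqrt_self A hA]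

theorem mul_eq_smul_one_of_sqrt_mul_mul_sqrt_eq {A B : Matrix n n 𝕜} (hA : A.PosDef) {c : 𝕜}
    (h : CFC.sqrt A * B * CFC.sqrt A = c • 1) : A * B = c • 1 := by
  have hS : IsUnit (CFC.sqrt A) := (CFC.isUnit_sqrt_iff A hA.posSemidef.nonneg).mpr hA.isUnit
  apply hS.mul_left_injective
  calc A * B * CFC.sqrt A = CFC.sqrt A * (CFC.sqrt A * B * CFC.sqrt A) := by
        rw [← Matrix.mul_assoc, ← Matrix.mul_assoc, CFC.sqrt_mul_sqrt_self A hA.posSemidef.nonneg]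
    _ = c • 1 * CFC.sqrt A := by rw [h]; simp

end Matrix

theorem trace_det_equality_case_general (n : ℕ)
    (A B : Matrix (Fin n) (Fin n) ℝ)
    (hA : A.PosDef) (hB : B.PosSemidef)
    (heq : (A * B).det = ((A * B).trace / n) ^ n) :
    ∃ l : ℝ, 0 ≤ l ∧ A * B = l • (1 : Matrix (Fin n) (Fin n) ℝ) := by
  have hA0 : 0 ≤ A := hA.posSemidef.nonneg
  have hM := posSemidef_sqrt_mul_mul_sqrt A hB
  have htr := trace_sqrt_mul_mul_sqrt hA0 B
  refine ⟨(A * B).trace / n, ?_, mul_eq_smul_one_of_sqrt_mul_mul_sqrt_eq hA ?_⟩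
  · rw [← htr]
    exact div_nonneg hM.trace_nonneg n.cast_nonneg
  · simpa [htr] using hM.eq_smul_one_of_det_eq_trace_div_card_pow
      (by simpa [det_sqrt_mul_mul_sqrt hA0, htr] using heq)

theorem trace_det_equality_case (n : ℕ) (hn : 1 ≤ n)
    (A B : Matrix (Fin n) (Fin n) ℝ)
    (hAs : Aᵀ = A) (hBs : Bᵀ = B)
    (hA : A.PosDef) (hB : B.PosSemidef)
    (heq : (A * B).det = ((A * B).trace / n) ^ n) :
    ∃ l : ℝ, 0 ≤ l ∧ A * B = l • (1 : Matrix (Fin n) (Fin n) ℝ) :=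
  trace_det_equality_case_general n A B hA hB heq
end

section
/- Let A be an n×n positive definite symmetric real matrix and S an n×n symmetric real matrix. If trace(A·S) ≤ n·(det A)^(1/(n−1)) and I + S is positive semidefinite, then det(I + S) ≤ (1/det A)·(trace(A)/n + (det A)^(1/(n−1)))^n. -/
/-! Writing `A = Bᴴ B`, the matrix `B (1 + S) Bᴴ` is positive semidefinite with determinant
`det A * det (1 + S)` and trace `tr A + tr (A S)`; AM-GM on its eigenvalues bounds the determinant
by `(trace / n) ^ n`, and the hypothesis on `tr (A S)` bounds that trace. -/

open Matrix Finset
open scoped MatrixOrder ComplexOrder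

theorem Real.prod_le_sum_div_card_pow {ι : Type*} (s : Finset ι) {z : ι → ℝ}
    (hz : ∀ i ∈ s, 0 ≤ z i) : ∏ i ∈ s, z i ≤ ((∑ i ∈ s, z i) / #s) ^ #s := by
  rcases s.eq_empty_or_nonempty with rfl | hs
  · simp
  have hcard : (0 : ℝ) < #s := by exact_mod_cast hs.card_pos
  have amgm := Real.geom_mean_le_arith_mean_weighted s (fun _ ↦ (#s : ℝ)⁻¹) z
    (fun _ _ ↦ by positivity) (by simp [hcard.ne']) hz
  rw [Real.finsetProd_rpow s z hz, ← mul_sum, inv_mul_eq_div] at amgm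
  calc ∏ i ∈ s, z i = ((∏ i ∈ s, z i) ^ (#s : ℝ)⁻¹) ^ #s := by
        rw [← Real.rpow_natCast, ← Real.rpow_mul (prod_nonneg hz), inv_mul_cancel₀ hcard.ne',
          Real.rpow_one]
    _ ≤ _ := pow_le_pow_left₀ (Real.rpow_nonneg (prod_nonneg hz) _) amgm _

namespace Matrix

variable {m : Type*} [Fintype m] [DecidableEq m]

theorem PosSemidef.det_le_trace_div_card_pow {M : Matrix m m ℝ} (hM : M.PosSemidef) :
    M.det ≤ (M.trace / Fintype.card m) ^ Fintype.card m := by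
  rw [hM.isHermitian.det_eq_prod_eigenvalues, hM.isHermitian.trace_eq_sum_eigenvalues]
  simpa using Real.prod_le_sum_div_card_pow univ fun i _ ↦ hM.eigenvalues_nonneg i

theorem PosSemidef.exists_posSemidef_det_eq_trace_eq {𝕜 : Type*} [RCLike 𝕜]
    {A T : Matrix m m 𝕜} (hA : A.PosSemidef) (hT : T.PosSemidef) :
    ∃ C : Matrix m m 𝕜, C.PosSemidef ∧ C.det = A.det * T.det ∧ C.trace = (A * T).trace := by
  obtain ⟨B, rfl⟩ := CStarAlgebra.nonneg_iff_eq_star_mul_self.mp hA.nonneg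
  refine ⟨B * T * Bᴴ, hT.mul_mul_conjTranspose_same B, ?_, ?_⟩
  · simp only [det_mul, star_eq_conjTranspose]; ring
  · rw [star_eq_conjTranspose, trace_mul_cycle]

end Matrix

theorem det_one_add_S_bound_general (n : ℕ)
    (A S : Matrix (Fin n) (Fin n) ℝ)
    (hA : A.PosDef)
    (hpos : (1 + S).PosSemidef)
    (htr : (A * S).trace ≤ n * A.det ^ ((1 : ℝ) / ((n : ℝ) - 1))) :
    (1 + S).det ≤ (1 / A.det) *
      (A.trace / n + A.det ^ ((1 : ℝ) / ((n : ℝ) - 1))) ^ n := by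
  set c := A.det ^ ((1 : ℝ) / ((n : ℝ) - 1))
  obtain ⟨C, hC, hCdet, hCtr⟩ := hA.posSemidef.exists_posSemidef_det_eq_trace_eq hpos
  have hmean : C.trace / n ≤ A.trace / n + c := by
    rw [hCtr, mul_add, mul_one, trace_add, add_div]
    gcongr
    exact div_le_of_le_mul₀ (Nat.cast_nonneg n) (Real.rpow_nonneg hA.det_pos.le _)
      (by rwa [mul_comm])
  rw [one_div_mul_eq_div, le_div_iff₀' hA.det_pos, ← hCdet]
  calc C.det ≤ (C.trace / n) ^ n := by simpa using hC.det_le_trace_div_card_pow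
    _ ≤ _ := pow_le_pow_left₀ (by have := hC.trace_nonneg; positivity) hmean n

theorem det_one_add_S_bound (n : ℕ) (hn : 2 ≤ n)
    (A S : Matrix (Fin n) (Fin n) ℝ)
    (hAs : Aᵀ = A) (hSs : Sᵀ = S)
    (hA : A.PosDef)
    (hpos : (1 + S).PosSemidef)
    (htr : (A * S).trace ≤ n * A.det ^ ((1 : ℝ) / ((n : ℝ) - 1))) :
    (1 + S).det ≤ (1 / A.det) *
      (A.trace / n + A.det ^ ((1 : ℝ) / ((n : ℝ) - 1))) ^ n :=
  det_one_add_S_bound_general n A S hA hpos htr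
end
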